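/- arXiv:2409.16519 — 2 statements merged into one kernel-verified Lean document; each statement's English description precedes it below -/
import Mathlib

section
/- Let T>0, ν>0, d∈ℕ⁺, let f:[0,T]×ℝ^d×ℂ→ℂ be continuous, and let u∈C^{1,2}([0,T]×ℝ^d;ℂ) be a classical solution of i∂_t u(t,x) = (ν/2)Δu(t,x) + f(t,x,u(t,x)). Assume that for every t∈[0,T] the function x↦u(t,x) is a Schwartz function, and that there is a Lebesgue-integrable function h:ℝ^d→[0,∞) such that for all t∈[0,T] and x∈ℝ^d, |u(t,x)|² + |u(t,x)||∂_t u(t,x)| + |∇u(t,x)|² + |u(t,x)||Δu(t,x)| + |u(t,x)||f(t,x,u(t,x))| ≤ h(x). Then for every t∈[0,T]: ∫_{ℝ^d}|u^R(T,x)|²dx − ∫_{ℝ^d}|u^R(t,x)|²dx = −ν∫_t^T∫_{ℝ^d} ∇u^R(s,x)·∇u^I(s,x) dx ds + 2∫_t^T∫_{ℝ^d} u^R(s,x)·f^I(s,x,u(s,x)) dx ds. -/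
open MeasureTheory Set
open scoped BigOperators

/-- Time derivative `∂_t u(t,x)`. -/
noncomputable def tderiv {d : ℕ} (u : ℝ → EuclideanSpace ℝ (Fin d) → ℂ)
    (t : ℝ) (x : EuclideanSpace ℝ (Fin d)) : ℂ :=
  deriv (fun s => u s x) t

/-- Spatial Laplacian of a complex-valued function on `ℝ^d`. -/
noncomputable def lapC {d : ℕ} (v : EuclideanSpace ℝ (Fin d) → ℂ)
    (x : EuclideanSpace ℝ (Fin d)) : ℂ :=
  ∑ j : Fin d, fderiv ℝ (fun y => fderiv ℝ v y (EuclideanSpace.single j 1)) x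
    (EuclideanSpace.single j 1)

/-- `u ∈ C^{1,2}` : `u` is continuous, with (jointly) continuous time derivative and
(jointly) continuous first and second spatial derivatives. -/
def IsC12 {d : ℕ} (u : ℝ → EuclideanSpace ℝ (Fin d) → ℂ) : Prop :=
  Continuous (fun p : ℝ × EuclideanSpace ℝ (Fin d) => u p.1 p.2) ∧
  (∀ x, Differentiable ℝ fun t => u t x) ∧
  Continuous (fun p : ℝ × EuclideanSpace ℝ (Fin d) => deriv (fun s => u s p.2) p.1) ∧
  (∀ t, ContDiff ℝ 2 (u t)) ∧
  Continuous (fun p : ℝ × EuclideanSpace ℝ (Fin d) => fderiv ℝ (u p.1) p.2) ∧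
  Continuous (fun p : ℝ × EuclideanSpace ℝ (Fin d) =>
    fderiv ℝ (fun y => fderiv ℝ (u p.1) y) p.2)

/-!
Taking imaginary parts in the equation gives `∂ₜ Re u = (ν/2) Im Δu + Im f`, so formally
`d/dt ∫ (Re u)² = ν ∫ Re u · Im Δu + 2 ∫ Re u · Im f(u)`. The majorant `h` justifies
differentiating under the integral sign and makes the right-hand side continuous in time
(dominated convergence), so the fundamental theorem of calculus applies. Since `u(t)` is a
Schwartz function, one integration by parts in each coordinate turns `∫ Re u · Im Δu` into
`-∫ ∇Re u · ∇Im u`.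
-/

open InnerProductSpace LineDeriv RealInnerProductSpace Gradient

section Gradient

variable {F : Type*} [NormedAddCommGroup F] [InnerProductSpace ℝ F] [CompleteSpace F]

theorem gradient_clm_comp {v : F → ℂ} {x : F} (hv : DifferentiableAt ℝ v x) (L : ℂ →L[ℝ] ℝ) :
    ∇ (fun y => L (v y)) x = (toDual ℝ F).symm (L.comp (fderiv ℝ v x)) :=
  congrArg (toDual ℝ F).symm (L.hasFDerivAt.comp x hv.hasFDerivAt).fderiv

theorem inner_gradient_re_gradient_im {v : F → ℂ} {x : F} (hv : DifferentiableAt ℝ v x) :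
    ⟪∇ (fun y => (v y).re) x, ∇ (fun y => (v y).im) x⟫
      = ⟪(toDual ℝ F).symm (Complex.reCLM.comp (fderiv ℝ v x)),
          (toDual ℝ F).symm (Complex.imCLM.comp (fderiv ℝ v x))⟫ := by
  rw [← gradient_clm_comp hv, ← gradient_clm_comp hv]
  rfl

theorem abs_inner_gradient_re_gradient_im_le {v : F → ℂ} {x : F} (hv : DifferentiableAt ℝ v x) :
    |⟪∇ (fun y => (v y).re) x, ∇ (fun y => (v y).im) x⟫| ≤ ‖fderiv ℝ v x‖ ^ 2 := by
  have hcomp : ∀ L : ℂ →L[ℝ] ℝ, ‖L‖ = 1 →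
      ‖(toDual ℝ F).symm (L.comp (fderiv ℝ v x))‖ ≤ ‖fderiv ℝ v x‖ := fun L hL => by
    simpa [hL] using L.opNorm_comp_le (fderiv ℝ v x)
  rw [inner_gradient_re_gradient_im hv, sq]
  exact (abs_real_inner_le_norm _ _).trans
    (mul_le_mul (hcomp _ Complex.reCLM_norm) (hcomp _ Complex.imCLM_norm) (norm_nonneg _)
      (norm_nonneg _))

theorem continuous_inner_gradient_re_gradient_im {X : Type*} [TopologicalSpace X]
    {v : X → F → ℂ} {x : X → F} (hv : ∀ p, DifferentiableAt ℝ (v p) (x p))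
    (hcont : Continuous fun p => fderiv ℝ (v p) (x p)) :
    Continuous fun p => ⟪∇ (fun y => (v p y).re) (x p), ∇ (fun y => (v p y).im) (x p)⟫ := by
  simp_rw [inner_gradient_re_gradient_im (hv _)]
  fun_prop

theorem inner_gradient_re_gradient_im_eq_sum {ι : Type*} [Fintype ι] (b : OrthonormalBasis ι ℝ F)
    {v : F → ℂ} {x : F} (hv : DifferentiableAt ℝ v x) :
    ⟪∇ (fun y => (v y).re) x, ∇ (fun y => (v y).im) x⟫
      = ∑ i, (fderiv ℝ v x (b i)).re * (fderiv ℝ v x (b i)).im := by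
  rw [inner_gradient_re_gradient_im hv, ← b.sum_inner_mul_inner]
  simp only [real_inner_comm _ (b _), toDual_symm_apply]
  rfl

end Gradient

theorem HasDerivAt.re_sq {v : ℝ → ℂ} {v' : ℂ} {s : ℝ} (hv : HasDerivAt v v' s) :
    HasDerivAt (fun σ => (v σ).re ^ 2) (2 * (v s).re * v'.re) s := by
  have hre : HasDerivAt (fun σ => (v σ).re) v'.re s :=
    Complex.reCLM.hasFDerivAt.comp_hasDerivAt s hv
  exact (hre.fun_pow 2).congr_deriv (by norm_num)

theorem Complex.re_eq_of_I_mul_eq {z w g : ℂ} {ν : ℝ} (h : I * z = (ν / 2 : ℂ) * w + g) :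
    z.re = ν / 2 * w.im + g.im := by
  simpa using congrArg Complex.im h

theorem Complex.norm_re_mul_re_le (z w : ℂ) : ‖z.re * w.re‖ ≤ ‖z‖ * ‖w‖ := by
  rw [norm_mul, Real.norm_eq_abs, Real.norm_eq_abs]
  exact mul_le_mul (Complex.abs_re_le_norm z) (Complex.abs_re_le_norm w) (abs_nonneg _)
    (norm_nonneg _)

theorem Complex.norm_re_mul_im_le (z w : ℂ) : ‖z.re * w.im‖ ≤ ‖z‖ * ‖w‖ := by
  rw [norm_mul, Real.norm_eq_abs, Real.norm_eq_abs]
  exact mul_le_mul (Complex.abs_re_le_norm z) (Complex.abs_im_le_norm w) (abs_nonneg _)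
    (norm_nonneg _)

noncomputable def Complex.reMulImCLM : ℂ →L[ℝ] ℂ →L[ℝ] ℝ :=
  (ContinuousLinearMap.mul ℝ ℝ).bilinearComp Complex.reCLM Complex.imCLM

namespace SchwartzMap

open Laplacian

variable {D : Type*} [NormedAddCommGroup D] [InnerProductSpace ℝ D] [FiniteDimensional ℝ D]
  [MeasurableSpace D] [BorelSpace D] {μ : Measure D} [μ.IsAddHaarMeasure]

theorem integrable_re_mul_im (ψ χ : 𝓢(D, ℂ)) : Integrable (fun x => (ψ x).re * (χ x).im) μ :=
  (pairing Complex.reMulImCLM ψ χ).integrable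

theorem integral_re_mul_im_laplacian (φ : 𝓢(D, ℂ)) :
    ∫ x, (φ x).re * (Δ φ x).im ∂μ
      = -∫ x, ⟪∇ (fun y => (φ y).re) x, ∇ (fun y => (φ y).im) x⟫ ∂μ := by
  let b := stdOrthonormalBasis ℝ D
  simp_rw [laplacian_eq_sum b, sum_apply, Complex.im_sum, Finset.mul_sum,
    inner_gradient_re_gradient_im_eq_sum b φ.differentiableAt, ← lineDerivOp_apply_eq_fderiv]
  rw [integral_finsetSum _ fun i _ => integrable_re_mul_im _ _,
    integral_finsetSum _ fun i _ => integrable_re_mul_im _ _, ← Finset.sum_neg_distrib]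
  exact Finset.sum_congr rfl fun i _ =>
    integral_bilinear_lineDerivOp_right_eq_neg_left φ _ Complex.reMulImCLM _

theorem lapC_eq_laplacian {d : ℕ} (φ : 𝓢(EuclideanSpace ℝ (Fin d), ℂ))
    (x : EuclideanSpace ℝ (Fin d)) : lapC φ x = Δ φ x := by
  simp only [lapC, laplacian_eq_sum (EuclideanSpace.basisFun (Fin d) ℝ), sum_apply,
    EuclideanSpace.basisFun_apply]
  rfl

theorem integral_two_re_mul_re_eq_of_schrodinger {ν : ℝ} (φ : 𝓢(D, ℂ)) {w g : D → ℂ}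
    (hpde : ∀ x, Complex.I * w x = (ν / 2 : ℂ) * Δ φ x + g x)
    (hg : Integrable (fun x => (φ x).re * (g x).im) μ) :
    ∫ x, 2 * (φ x).re * (w x).re ∂μ
      = -ν * ∫ x, ⟪∇ (fun y => (φ y).re) x, ∇ (fun y => (φ y).im) x⟫ ∂μ
        + 2 * ∫ x, (φ x).re * (g x).im ∂μ := by
  have hpt : ∀ x, 2 * (φ x).re * (w x).re
      = ν * ((φ x).re * (Δ φ x).im) + 2 * ((φ x).re * (g x).im) := fun x => by
    rw [Complex.re_eq_of_I_mul_eq (hpde x)]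
    ring
  simp_rw [hpt]
  rw [integral_add ((integrable_re_mul_im φ (Δ φ)).const_mul ν) (hg.const_mul 2),
    integral_const_mul, integral_const_mul, integral_re_mul_im_laplacian]
  ring

theorem integral_two_re_mul_re_eq_of_lapC {d : ℕ} {ν : ℝ} {v w g : EuclideanSpace ℝ (Fin d) → ℂ}
    (hv : ∃ φ : 𝓢(EuclideanSpace ℝ (Fin d), ℂ), ∀ x, v x = φ x)
    (hpde : ∀ x, Complex.I * w x = (ν / 2 : ℂ) * lapC v x + g x)
    (hg : Integrable fun x => (v x).re * (g x).im) :
    ∫ x, 2 * (v x).re * (w x).re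
      = -ν * (∫ x, ⟪∇ (fun y => (v y).re) x, ∇ (fun y => (v y).im) x⟫)
        + 2 * ∫ x, (v x).re * (g x).im := by
  obtain ⟨φ, hφ⟩ := hv
  obtain rfl : v = φ := funext hφ
  simp only [lapC_eq_laplacian] at hpde
  exact integral_two_re_mul_re_eq_of_schrodinger φ hpde hg

end SchwartzMap

section ParametricIntegral

variable {X : Type*} [TopologicalSpace X] [MeasurableSpace X] [OpensMeasurableSpace X]
  {μ : Measure X}

theorem continuousOn_integral_of_continuous_uncurry {Y : Type*} [TopologicalSpace Y]
    [FirstCountableTopology Y]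
    {F : Y → X → ℝ} {g : X → ℝ} {S : Set Y} (hF : Continuous (Function.uncurry F))
    (hg : Integrable g μ) (hFg : ∀ s ∈ S, ∀ x, ‖F s x‖ ≤ g x) :
    ContinuousOn (fun s => ∫ x, F s x ∂μ) S :=
  continuousOn_of_dominated (fun s _ => (hF.uncurry_left s).aestronglyMeasurable)
    (fun s hs => ae_of_all _ (hFg s hs)) hg
    (ae_of_all _ fun _ => (hF.comp (continuous_id.prodMk continuous_const)).continuousOn)

theorem integral_sub_integral_eq_intervalIntegral_integral {F F' : ℝ → X → ℝ} {g g' : X → ℝ}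
    {a b : ℝ} (hab : a ≤ b) (hF : Continuous (Function.uncurry F))
    (hF' : Continuous (Function.uncurry F')) (hg : Integrable g μ) (hg' : Integrable g' μ)
    (hFg : ∀ s ∈ Icc a b, ∀ x, ‖F s x‖ ≤ g x) (hF'g' : ∀ s ∈ Icc a b, ∀ x, ‖F' s x‖ ≤ g' x)
    (hderiv : ∀ s ∈ Ioo a b, ∀ x, HasDerivAt (F · x) (F' s x) s) :
    ∫ x, F b x ∂μ - ∫ x, F a x ∂μ = ∫ s in a..b, ∫ x, F' s x ∂μ := by
  have hmeas : ∀ s, AEStronglyMeasurable (F s) μ := fun s =>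
    (hF.uncurry_left s).aestronglyMeasurable
  refine (intervalIntegral.integral_eq_sub_of_hasDeriv_right_of_le hab
    (continuousOn_integral_of_continuous_uncurry hF hg hFg) (fun s hs => ?_)
    ((continuousOn_integral_of_continuous_uncurry hF' hg' hF'g').intervalIntegrable_of_Icc
      hab)).symm
  have hsIcc : s ∈ Icc a b := Ioo_subset_Icc_self hs
  exact (hasDerivAt_integral_of_dominated_loc_of_deriv_le (Ioo_mem_nhds hs.1 hs.2)
    (Filter.Eventually.of_forall hmeas)
    (hg.mono' (hmeas s) (ae_of_all _ (hFg s hsIcc)))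
    (hF'.uncurry_left s).aestronglyMeasurable
    (ae_of_all _ fun x σ hσ => hF'g' σ (Ioo_subset_Icc_self hσ) x) hg'
    (ae_of_all _ fun x σ hσ => hderiv σ hσ x)).2.hasDerivWithinAt

end ParametricIntegral

theorem continuous_uncurry_re_mul_im_comp {X : Type*} [TopologicalSpace X] {u : ℝ → X → ℂ}
    {f : ℝ → X → ℂ → ℂ} (hu : Continuous fun p : ℝ × X => u p.1 p.2)
    (hf : Continuous fun p : ℝ × X × ℂ => f p.1 p.2.1 p.2.2) :
    Continuous (Function.uncurry fun s x => (u s x).re * (f s x (u s x)).im) :=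
  (Complex.continuous_re.comp hu).mul
    (Complex.continuous_im.comp (hf.comp (continuous_fst.prodMk (continuous_snd.prodMk hu))))

namespace IsC12

variable {d : ℕ} {u : ℝ → EuclideanSpace ℝ (Fin d) → ℂ} {h : EuclideanSpace ℝ (Fin d) → ℝ}

theorem integral_re_sq_sub_eq_intervalIntegral (hu : IsC12 u) {a b : ℝ} (hab : a ≤ b)
    (hh : Integrable h) (hu_le : ∀ s ∈ Icc a b, ∀ x, ‖u s x‖ ^ 2 ≤ h x)
    (hut_le : ∀ s ∈ Icc a b, ∀ x, ‖u s x‖ * ‖tderiv u s x‖ ≤ h x) :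
    (∫ x, (u b x).re ^ 2) - ∫ x, (u a x).re ^ 2
      = ∫ s in a..b, ∫ x, 2 * (u s x).re * (tderiv u s x).re := by
  obtain ⟨hu_cont, hu_tdiff, hu_tderiv_cont, -⟩ := hu
  have hcont : Continuous (Function.uncurry fun s x => (u s x).re ^ 2) :=
    (Complex.continuous_re.comp hu_cont).pow 2
  have hcont' : Continuous (Function.uncurry fun s x => 2 * (u s x).re * (tderiv u s x).re) :=
    (continuous_const.mul (Complex.continuous_re.comp hu_cont)).mul
      (Complex.continuous_re.comp hu_tderiv_cont)
  refine integral_sub_integral_eq_intervalIntegral_integral hab hcont hcont' hh (hh.const_mul 2)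
    (fun s hs x => ?_) (fun s hs x => ?_) fun s _ x => (hu_tdiff x s).hasDerivAt.re_sq
  · rw [sq]
    exact (Complex.norm_re_mul_re_le _ _).trans ((sq _).symm.trans_le (hu_le s hs x))
  · rw [mul_assoc, norm_mul, Real.norm_two]
    exact mul_le_mul_of_nonneg_left ((Complex.norm_re_mul_re_le _ _).trans (hut_le s hs x))
      zero_le_two

theorem continuousOn_integral_inner_gradient_re_gradient_im (hu : IsC12 u) {S : Set ℝ}
    (hh : Integrable h) (hdu_le : ∀ s ∈ S, ∀ x, ‖fderiv ℝ (u s) x‖ ^ 2 ≤ h x) :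
    ContinuousOn (fun s => ∫ x, ⟪∇ (fun y => (u s y).re) x, ∇ (fun y => (u s y).im) x⟫) S := by
  obtain ⟨-, -, -, hu_C2, hu_fderiv_cont, -⟩ := hu
  have hdiff : ∀ s, Differentiable ℝ (u s) := fun s => (hu_C2 s).differentiable (by norm_num)
  exact continuousOn_integral_of_continuous_uncurry
    (F := fun s x => ⟪∇ (fun y => (u s y).re) x, ∇ (fun y => (u s y).im) x⟫)
    (continuous_inner_gradient_re_gradient_im (fun p => hdiff p.1 p.2) hu_fderiv_cont) hh
    fun s hs x => (abs_inner_gradient_re_gradient_im_le (hdiff s x)).trans (hdu_le s hs x)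

end IsC12

theorem stmt8_general (T ν : ℝ) (d : ℕ)
    (f : ℝ → EuclideanSpace ℝ (Fin d) → ℂ → ℂ)
    (hf : Continuous fun p : ℝ × EuclideanSpace ℝ (Fin d) × ℂ => f p.1 p.2.1 p.2.2)
    (u : ℝ → EuclideanSpace ℝ (Fin d) → ℂ) (hu : IsC12 u)
    (hpde : ∀ t ∈ Icc (0:ℝ) T, ∀ x,
      Complex.I * tderiv u t x = (ν / 2 : ℂ) * lapC (u t) x + f t x (u t x))
    (hSchwartz : ∀ t ∈ Icc (0:ℝ) T,
      ∃ φ : SchwartzMap (EuclideanSpace ℝ (Fin d)) ℂ, ∀ x, u t x = φ x)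
    (h : EuclideanSpace ℝ (Fin d) → ℝ) (hhint : Integrable h)
    (hbound : ∀ t ∈ Icc (0:ℝ) T, ∀ x,
      ‖u t x‖^2 + ‖u t x‖ * ‖tderiv u t x‖ + ‖fderiv ℝ (u t) x‖^2
        + ‖u t x‖ * ‖lapC (u t) x‖ + ‖u t x‖ * ‖f t x (u t x)‖ ≤ h x) :
    ∀ t ∈ Icc (0:ℝ) T,
      (∫ x, ((u T x).re)^2) - (∫ x, ((u t x).re)^2)
        = -ν * (∫ s in t..T, ∫ x,
            (inner ℝ (gradient (fun y => (u s y).re) x)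
              (gradient (fun y => (u s y).im) x) : ℝ))
          + 2 * (∫ s in t..T, ∫ x, (u s x).re * (f s x (u s x)).im) := by
  intro t ht
  have hsub : Icc t T ⊆ Icc 0 T := Icc_subset_Icc_left ht.1
  have hb : ∀ s ∈ Icc t T, ∀ x, ‖u s x‖ ^ 2 ≤ h x ∧ ‖u s x‖ * ‖tderiv u s x‖ ≤ h x ∧
      ‖fderiv ℝ (u s) x‖ ^ 2 ≤ h x ∧ ‖u s x‖ * ‖f s x (u s x)‖ ≤ h x := fun s hs x => by
    have := hbound s (hsub hs) x
    refine ⟨?_, ?_, ?_, ?_⟩ <;> linarith [sq_nonneg ‖u s x‖, sq_nonneg ‖fderiv ℝ (u s) x‖,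
      mul_nonneg (norm_nonneg (u s x)) (norm_nonneg (tderiv u s x)),
      mul_nonneg (norm_nonneg (u s x)) (norm_nonneg (lapC (u s) x)),
      mul_nonneg (norm_nonneg (u s x)) (norm_nonneg (f s x (u s x)))]
  have hcont_B := continuous_uncurry_re_mul_im_comp hu.1 hf
  have hb_B : ∀ s ∈ Icc t T, ∀ x, ‖(u s x).re * (f s x (u s x)).im‖ ≤ h x := fun s hs x =>
    (Complex.norm_re_mul_im_le _ _).trans (hb s hs x).2.2.2
  have hA := hu.continuousOn_integral_inner_gradient_re_gradient_im hhint
    fun s hs x => (hb s hs x).2.2.1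
  have hB := continuousOn_integral_of_continuous_uncurry (μ := volume) hcont_B hhint hb_B
  have henergy : EqOn (fun s => ∫ x, 2 * (u s x).re * (tderiv u s x).re)
      (fun s => -ν * (∫ x, ⟪∇ (fun y => (u s y).re) x, ∇ (fun y => (u s y).im) x⟫)
        + 2 * ∫ x, (u s x).re * (f s x (u s x)).im) (uIcc t T) := fun s hs => by
    rw [uIcc_of_le ht.2] at hs
    exact SchwartzMap.integral_two_re_mul_re_eq_of_lapC (hSchwartz s (hsub hs)) (hpde s (hsub hs))
      (hhint.mono' (hcont_B.uncurry_left s).aestronglyMeasurable (ae_of_all _ (hb_B s hs)))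
  rw [hu.integral_re_sq_sub_eq_intervalIntegral ht.2 hhint (fun s hs x => (hb s hs x).1)
      (fun s hs x => (hb s hs x).2.1),
    intervalIntegral.integral_congr henergy,
    intervalIntegral.integral_add ((hA.intervalIntegrable_of_Icc ht.2).const_mul _)
      ((hB.intervalIntegrable_of_Icc ht.2).const_mul _),
    intervalIntegral.integral_const_mul, intervalIntegral.integral_const_mul]

/-- Energy identity for the real part of a classical solution of the backward nonlinear
Schrödinger equation. -/
theorem stmt8 (T ν : ℝ) (hT : 0 < T) (hν : 0 < ν) (d : ℕ) (hd : 0 < d)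
    (f : ℝ → EuclideanSpace ℝ (Fin d) → ℂ → ℂ)
    (hf : Continuous fun p : ℝ × EuclideanSpace ℝ (Fin d) × ℂ => f p.1 p.2.1 p.2.2)
    (u : ℝ → EuclideanSpace ℝ (Fin d) → ℂ) (hu : IsC12 u)
    (hpde : ∀ t ∈ Icc (0:ℝ) T, ∀ x,
      Complex.I * tderiv u t x = (ν / 2 : ℂ) * lapC (u t) x + f t x (u t x))
    (hSchwartz : ∀ t ∈ Icc (0:ℝ) T,
      ∃ φ : SchwartzMap (EuclideanSpace ℝ (Fin d)) ℂ, ∀ x, u t x = φ x)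
    (h : EuclideanSpace ℝ (Fin d) → ℝ) (hh0 : ∀ x, 0 ≤ h x) (hhint : Integrable h)
    (hbound : ∀ t ∈ Icc (0:ℝ) T, ∀ x,
      ‖u t x‖^2 + ‖u t x‖ * ‖tderiv u t x‖ + ‖fderiv ℝ (u t) x‖^2
        + ‖u t x‖ * ‖lapC (u t) x‖ + ‖u t x‖ * ‖f t x (u t x)‖ ≤ h x) :
    ∀ t ∈ Icc (0:ℝ) T,
      (∫ x, ((u T x).re)^2) - (∫ x, ((u t x).re)^2)
        = -ν * (∫ s in t..T, ∫ x,
            (inner ℝ (gradient (fun y => (u s y).re) x)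
              (gradient (fun y => (u s y).im) x) : ℝ))
          + 2 * (∫ s in t..T, ∫ x, (u s x).re * (f s x (u s x)).im) :=
  stmt8_general T ν d f hf u hu hpde hSchwartz h hhint hbound
end

section
/- Let T>0, ν>0, d∈ℕ⁺, let f:[0,T]×ℝ^d×ℂ→ℂ be continuous, and let u∈C^{1,2}([0,T]×ℝ^d;ℂ) be a classical solution of i∂_t u(t,x) = (ν/2)Δu(t,x) + f(t,x,u(t,x)). Assume that for every t∈[0,T] the function x↦u(t,x) is a Schwartz function, and that there is a Lebesgue-integrable function h:ℝ^d→[0,∞) such that for all t∈[0,T] and x∈ℝ^d, |u(t,x)|² + |u(t,x)||∂_t u(t,x)| + |∇u(t,x)|² + |u(t,x)||Δu(t,x)| + |u(t,x)||f(t,x,u(t,x))| ≤ h(x). Then for every t∈[0,T] the gradient terms cancel and the L² mass identity holds: ∫_{ℝ^d}|u(T,x)|²dx − ∫_{ℝ^d}|u(t,x)|²dx = 2∫_t^T∫_{ℝ^d} ( u^R(s,x)·f^I(s,x,u(s,x)) − u^I(s,x)·f^R(s,x,u(s,x)) ) dx ds. -/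
open MeasureTheory Set
open scoped BigOperators

namespace Aux

variable {d : ℕ}

noncomputable def dj (φ : SchwartzMap (EuclideanSpace ℝ (Fin d)) ℂ) (j : Fin d) :
    SchwartzMap (EuclideanSpace ℝ (Fin d)) ℂ :=
  SchwartzMap.evalCLM ℝ (EuclideanSpace ℝ (Fin d)) ℂ (EuclideanSpace.single j 1)
    (SchwartzMap.fderivCLM ℝ (EuclideanSpace ℝ (Fin d)) ℂ φ)

lemma dj_apply (φ : SchwartzMap (EuclideanSpace ℝ (Fin d)) ℂ) (j : Fin d) (x) :
    dj φ j x = fderiv ℝ φ x (EuclideanSpace.single j 1) := rfl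

lemma lapC_eq (φ : SchwartzMap (EuclideanSpace ℝ (Fin d)) ℂ) (x) :
    lapC (⇑φ) x = ∑ j : Fin d, dj (dj φ j) j x := by
  unfold lapC
  refine Finset.sum_congr rfl fun j _ => ?_
  rw [dj_apply]
  congr 1

lemma lapC_continuous (φ : SchwartzMap (EuclideanSpace ℝ (Fin d)) ℂ) :
    Continuous (lapC (⇑φ)) := by
  have : lapC (⇑φ) = fun x => ∑ j : Fin d, dj (dj φ j) j x := funext (lapC_eq φ)
  rw [this]
  exact continuous_finset_sum _ fun j _ => (dj (dj φ j) j).continuous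

lemma bddφ (φ : SchwartzMap (EuclideanSpace ℝ (Fin d)) ℂ) : ∃ C, ∀ x, ‖φ x‖ ≤ C := by
  obtain ⟨C, hC⟩ := φ.decay 0 0
  exact ⟨C, fun x => by simpa using hC.2 x⟩

lemma conj_mul_im (z : ℂ) : ((starRingEnd ℂ) z * z).im = 0 := by
  simp [Complex.mul_im]; ring

/-- integrability of `conj ψ₁ * ψ₂` for Schwartz maps. -/
lemma int_conj_mul (ψ₁ ψ₂ : SchwartzMap (EuclideanSpace ℝ (Fin d)) ℂ) :
    Integrable (fun x => (starRingEnd ℂ) (ψ₁ x) * ψ₂ x) := by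
  obtain ⟨C, hC⟩ := bddφ ψ₁
  exact ψ₂.integrable.bdd_mul
    ((Complex.continuous_conj.comp ψ₁.continuous).aestronglyMeasurable)
    (Filter.Eventually.of_forall fun x => by simpa using hC x)

lemma im_lap_int_zero (φ : SchwartzMap (EuclideanSpace ℝ (Fin d)) ℂ) :
    ∫ x, ((starRingEnd ℂ) (φ x) * lapC (⇑φ) x).im = 0 := by
  have key : ∀ j : Fin d,
      ∫ x, ((starRingEnd ℂ) (φ x) * dj (dj φ j) j x).im = 0 := by
    intro j
    set ψ := dj φ j with hψ
    have hder : ∀ x, fderiv ℝ (fun y => (starRingEnd ℂ) (φ y)) x (EuclideanSpace.single j 1)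
        = (starRingEnd ℂ) (ψ x) := by
      intro x
      have h1 : HasFDerivAt (fun y => (starRingEnd ℂ) (φ y))
          ((Complex.conjCLE.toContinuousLinearMap).comp (fderiv ℝ φ x)) x :=
        (Complex.conjCLE.toContinuousLinearMap.hasFDerivAt).comp x
          (φ.differentiable x).hasFDerivAt
      rw [h1.fderiv]
      rfl
    have hibp : ∫ x, (starRingEnd ℂ) (φ x)
          * fderiv ℝ (⇑ψ) x (EuclideanSpace.single j 1)
        = - ∫ x, fderiv ℝ (fun y => (starRingEnd ℂ) (φ y)) x (EuclideanSpace.single j 1)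
            * ψ x := by
      apply integral_mul_fderiv_eq_neg_fderiv_mul_of_integrable
      · have : (fun x => fderiv ℝ (fun y => (starRingEnd ℂ) (φ y)) x (EuclideanSpace.single j 1)
            * ψ x) = fun x => (starRingEnd ℂ) (ψ x) * ψ x := by
          funext x; rw [hder]
        rw [this]
        exact int_conj_mul ψ ψ
      · have : (fun x => (starRingEnd ℂ) (φ x) * fderiv ℝ (⇑ψ) x (EuclideanSpace.single j 1))
            = fun x => (starRingEnd ℂ) (φ x) * dj ψ j x := rfl
        rw [this]
        exact int_conj_mul φ (dj ψ j)
      · exact int_conj_mul φ ψ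
      · exact fun x _ => (Complex.conjCLE.differentiable.comp φ.differentiable) x
      · exact fun x _ => ψ.differentiable x
    have hint : Integrable (fun x => (starRingEnd ℂ) (φ x) * dj ψ j x) := int_conj_mul φ (dj ψ j)
    have : (fun x => (starRingEnd ℂ) (φ x) * dj ψ j x)
        = fun x => (starRingEnd ℂ) (φ x) * fderiv ℝ (⇑ψ) x (EuclideanSpace.single j 1) := rfl
    calc ∫ x, ((starRingEnd ℂ) (φ x) * dj ψ j x).im
        = (∫ x, (starRingEnd ℂ) (φ x) * dj ψ j x).im := integral_im hint
      _ = 0 := by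
          rw [this, hibp]
          have h2 : ∫ x, fderiv ℝ (fun y => (starRingEnd ℂ) (φ y)) x (EuclideanSpace.single j 1)
              * ψ x = ∫ x, (starRingEnd ℂ) (ψ x) * ψ x := by
            congr 1; funext x; rw [hder]
          have h0 : (∫ x, (starRingEnd ℂ) (ψ x) * ψ x).im = 0 :=
            calc (∫ x, (starRingEnd ℂ) (ψ x) * ψ x).im
                = ∫ x, ((starRingEnd ℂ) (ψ x) * ψ x).im := (integral_im (int_conj_mul ψ ψ)).symm
              _ = 0 := by simp only [conj_mul_im, integral_zero]
          rw [h2, Complex.neg_im, h0, neg_zero]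
  calc ∫ x, ((starRingEnd ℂ) (φ x) * lapC (⇑φ) x).im
      = ∫ x, ∑ j : Fin d, ((starRingEnd ℂ) (φ x) * dj (dj φ j) j x).im := by
        congr 1; funext x; rw [lapC_eq, Finset.mul_sum]
        exact Complex.im_sum _ _
    _ = ∑ j : Fin d, ∫ x, ((starRingEnd ℂ) (φ x) * dj (dj φ j) j x).im := by
        apply integral_finset_sum
        intro j _
        exact (int_conj_mul φ (dj (dj φ j) j)).im
    _ = 0 := Finset.sum_eq_zero fun j _ => key j

lemma im_conj_mul (z w : ℂ) : ((starRingEnd ℂ) z * w).im = z.re * w.im - z.im * w.re := by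
  simp [Complex.mul_im]; ring

lemma abs_im_conj_mul_le (z w : ℂ) : |((starRingEnd ℂ) z * w).im| ≤ ‖z‖ * ‖w‖ := by
  calc |((starRingEnd ℂ) z * w).im| ≤ ‖(starRingEnd ℂ) z * w‖ :=
        Complex.abs_im_le_norm _
    _ = ‖z‖ * ‖w‖ := by rw [norm_mul, RCLike.norm_conj]

lemma abs_re_conj_mul_le (z w : ℂ) : |((starRingEnd ℂ) z * w).re| ≤ ‖z‖ * ‖w‖ := by
  calc |((starRingEnd ℂ) z * w).re| ≤ ‖(starRingEnd ℂ) z * w‖ :=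
        Complex.abs_re_le_norm _
    _ = ‖z‖ * ‖w‖ := by rw [norm_mul, RCLike.norm_conj]

lemma pde_re (c : ℝ) (z w L F : ℂ) (hpde : Complex.I * w = (c : ℂ) * L + F) :
    2 * ((starRingEnd ℂ) z * w).re
      = 2 * c * ((starRingEnd ℂ) z * L).im + 2 * ((starRingEnd ℂ) z * F).im := by
  have hw : w = -(Complex.I) * ((c : ℂ) * L + F) := by
    have h1 : -(Complex.I) * (Complex.I * w) = w := by
      rw [← mul_assoc]
      simp [Complex.I_mul_I]
    rw [← h1, hpde]
  rw [hw]
  simp [Complex.mul_re, Complex.mul_im]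
  ring

end Aux

/-- L² mass identity for a classical solution of the backward nonlinear Schrödinger
equation: the gradient terms cancel. -/
theorem stmt10 (T ν : ℝ) (hT : 0 < T) (hν : 0 < ν) (d : ℕ) (hd : 0 < d)
    (f : ℝ → EuclideanSpace ℝ (Fin d) → ℂ → ℂ)
    (hf : Continuous fun p : ℝ × EuclideanSpace ℝ (Fin d) × ℂ => f p.1 p.2.1 p.2.2)
    (u : ℝ → EuclideanSpace ℝ (Fin d) → ℂ) (hu : IsC12 u)
    (hpde : ∀ t ∈ Icc (0:ℝ) T, ∀ x,
      Complex.I * tderiv u t x = (ν / 2 : ℂ) * lapC (u t) x + f t x (u t x))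
    (hSchwartz : ∀ t ∈ Icc (0:ℝ) T,
      ∃ φ : SchwartzMap (EuclideanSpace ℝ (Fin d)) ℂ, ∀ x, u t x = φ x)
    (h : EuclideanSpace ℝ (Fin d) → ℝ) (hh0 : ∀ x, 0 ≤ h x) (hhint : Integrable h)
    (hbound : ∀ t ∈ Icc (0:ℝ) T, ∀ x,
      ‖u t x‖^2 + ‖u t x‖ * ‖tderiv u t x‖ + ‖fderiv ℝ (u t) x‖^2
        + ‖u t x‖ * ‖lapC (u t) x‖ + ‖u t x‖ * ‖f t x (u t x)‖ ≤ h x) :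
    ∀ t ∈ Icc (0:ℝ) T,
      (∫ x, ‖u T x‖^2) - (∫ x, ‖u t x‖^2)
        = 2 * (∫ s in t..T, ∫ x,
            ((u s x).re * (f s x (u s x)).im - (u s x).im * (f s x (u s x)).re)) := by
  intro t ht
  obtain ⟨hcu, hdiff, hcut, hC2, hcd1, hcd2⟩ := hu
  -- continuity in x for fixed time
  have hcux : ∀ s, Continuous (fun x => u s x) :=
    fun s => hcu.comp (continuous_const.prodMk continuous_id)
  have hcutx : ∀ s, Continuous (fun x => tderiv u s x) :=
    fun s => hcut.comp (continuous_const.prodMk continuous_id)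
  have hcfx : ∀ s, Continuous (fun x => f s x (u s x)) :=
    fun s => hf.comp (continuous_const.prodMk (continuous_id.prodMk (hcux s)))
  -- continuity in s for fixed x
  have hcus : ∀ x, Continuous (fun s => u s x) :=
    fun x => hcu.comp (continuous_id.prodMk continuous_const)
  have hcfs : ∀ x, Continuous (fun s => f s x (u s x)) :=
    fun x => hf.comp (continuous_id.prodMk (continuous_const.prodMk (hcus x)))
  -- individual bounds
  have hb1 : ∀ s ∈ Icc (0:ℝ) T, ∀ x, ‖u s x‖^2 ≤ h x := by
    intro s hs x
    have H := hbound s hs x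
    nlinarith [norm_nonneg (u s x), norm_nonneg (tderiv u s x), norm_nonneg (fderiv ℝ (u s) x),
      norm_nonneg (lapC (u s) x), norm_nonneg (f s x (u s x)),
      mul_nonneg (norm_nonneg (u s x)) (norm_nonneg (tderiv u s x)),
      mul_nonneg (norm_nonneg (u s x)) (norm_nonneg (lapC (u s) x)),
      mul_nonneg (norm_nonneg (u s x)) (norm_nonneg (f s x (u s x))),
      sq_nonneg ‖fderiv ℝ (u s) x‖]
  have hb2 : ∀ s ∈ Icc (0:ℝ) T, ∀ x, ‖u s x‖ * ‖tderiv u s x‖ ≤ h x := by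
    intro s hs x
    have H := hbound s hs x
    nlinarith [mul_nonneg (norm_nonneg (u s x)) (norm_nonneg (lapC (u s) x)),
      mul_nonneg (norm_nonneg (u s x)) (norm_nonneg (f s x (u s x))),
      sq_nonneg ‖fderiv ℝ (u s) x‖, sq_nonneg ‖u s x‖]
  have hb4 : ∀ s ∈ Icc (0:ℝ) T, ∀ x, ‖u s x‖ * ‖lapC (u s) x‖ ≤ h x := by
    intro s hs x
    have H := hbound s hs x
    nlinarith [mul_nonneg (norm_nonneg (u s x)) (norm_nonneg (tderiv u s x)),
      mul_nonneg (norm_nonneg (u s x)) (norm_nonneg (f s x (u s x))),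
      sq_nonneg ‖fderiv ℝ (u s) x‖, sq_nonneg ‖u s x‖]
  have hb5 : ∀ s ∈ Icc (0:ℝ) T, ∀ x, ‖u s x‖ * ‖f s x (u s x)‖ ≤ h x := by
    intro s hs x
    have H := hbound s hs x
    nlinarith [mul_nonneg (norm_nonneg (u s x)) (norm_nonneg (tderiv u s x)),
      mul_nonneg (norm_nonneg (u s x)) (norm_nonneg (lapC (u s) x)),
      sq_nonneg ‖fderiv ℝ (u s) x‖, sq_nonneg ‖u s x‖]
  -- key pointwise time derivative
  have hptw : ∀ (s : ℝ) (x), HasDerivAt (fun r => ‖u r x‖^2)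
      (2 * ((starRingEnd ℂ) (u s x) * tderiv u s x).re) s := by
    intro s x
    have hw : HasDerivAt (fun r => u r x) (tderiv u s x) s := (hdiff x s).hasDerivAt
    have hre : HasDerivAt (fun r => (u r x).re) ((tderiv u s x).re) s :=
      (Complex.reCLM.hasFDerivAt.comp_hasDerivAt s hw)
    have him : HasDerivAt (fun r => (u r x).im) ((tderiv u s x).im) s :=
      (Complex.imCLM.hasFDerivAt.comp_hasDerivAt s hw)
    have hsum := (hre.mul hre).add (him.mul him)
    have hfun : (fun r => ‖u r x‖^2)
        = fun r => (u r x).re * (u r x).re + (u r x).im * (u r x).im := by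
      funext r
      rw [Complex.sq_norm, Complex.normSq_apply]
    rw [hfun]
    convert hsum using 1
    · rfl
    · rfl
    · rfl
    simp [Complex.mul_re]
    ring
  set G : ℝ → ℝ := fun s => ∫ x,
      ((u s x).re * (f s x (u s x)).im - (u s x).im * (f s x (u s x)).re) with hGdef
  -- derivative of the mass at interior points
  have hderivF : ∀ s ∈ Ioo t T,
      HasDerivAt (fun r => ∫ x, ‖u r x‖^2) (2 * G s) s := by
    intro s hs
    have hs0 : 0 < s := lt_of_le_of_lt ht.1 hs.1
    have hsT : s < T := hs.2
    have hsIcc : s ∈ Icc (0:ℝ) T := ⟨hs0.le, hsT.le⟩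
    set ε := min s (T - s) with hε
    have hεpos : 0 < ε := lt_min hs0 (by linarith)
    have hball : Metric.ball s ε ⊆ Icc (0:ℝ) T := by
      intro r hr
      rw [Metric.mem_ball, Real.dist_eq, abs_lt] at hr
      constructor
      · have := min_le_left s (T - s); simp only [hε] at hr; linarith
      · have := min_le_right s (T - s); simp only [hε] at hr; linarith
    have key := hasDerivAt_integral_of_dominated_loc_of_deriv_le (𝕜 := ℝ)
      (F := fun r x => ‖u r x‖^2)
      (F' := fun r x => 2 * ((starRingEnd ℂ) (u r x) * tderiv u r x).re)
      (bound := fun x => 2 * h x) (Metric.ball_mem_nhds s hεpos)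
      (Filter.Eventually.of_forall fun r => ((hcux r).norm.pow 2).aestronglyMeasurable)
      (hhint.mono' ((hcux s).norm.pow 2).aestronglyMeasurable
        (Filter.Eventually.of_forall fun x => by
          rw [Real.norm_eq_abs, abs_of_nonneg (by positivity)]
          exact hb1 s hsIcc x))
      ((continuous_const.mul (Complex.continuous_re.comp
        ((Complex.continuous_conj.comp (hcux s)).mul (hcutx s)))).aestronglyMeasurable)
      (Filter.Eventually.of_forall fun x => fun r hr => by
        have hrIcc : r ∈ Icc (0: ℝ) T := hball hr
        rw [Real.norm_eq_abs, abs_mul, abs_of_nonneg (by norm_num : (0:ℝ) ≤ 2)]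
        have := (Aux.abs_re_conj_mul_le (u r x) (tderiv u r x)).trans (hb2 r hrIcc x)
        show (2:ℝ) * |((starRingEnd ℂ) (u r x) * tderiv u r x).re| ≤ 2 * h x
        linarith)
      (hhint.const_mul 2)
      (Filter.Eventually.of_forall fun x => fun r _ => hptw r x)
    have hval : (∫ x, 2 * ((starRingEnd ℂ) (u s x) * tderiv u s x).re) = 2 * G s := by
      obtain ⟨φ, hφ⟩ := hSchwartz s hsIcc
      have husφ : u s = ⇑φ := funext hφ
      have hlapcont : Continuous (lapC (u s)) := by
        rw [husφ]; exact Aux.lapC_continuous φ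
      have hI1 : Integrable (fun x => ((starRingEnd ℂ) (u s x) * lapC (u s) x).im) := by
        refine hhint.mono' ((Complex.continuous_im.comp
          ((Complex.continuous_conj.comp (hcux s)).mul hlapcont)).aestronglyMeasurable)
          (Filter.Eventually.of_forall fun x => ?_)
        rw [Real.norm_eq_abs]
        exact (Aux.abs_im_conj_mul_le _ _).trans (hb4 s hsIcc x)
      have hI2 : Integrable (fun x => ((starRingEnd ℂ) (u s x) * f s x (u s x)).im) := by
        refine hhint.mono' ((Complex.continuous_im.comp
          ((Complex.continuous_conj.comp (hcux s)).mul (hcfx s))).aestronglyMeasurable)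
          (Filter.Eventually.of_forall fun x => ?_)
        rw [Real.norm_eq_abs]
        exact (Aux.abs_im_conj_mul_le _ _).trans (hb5 s hsIcc x)
      have hpt : ∀ x, 2 * ((starRingEnd ℂ) (u s x) * tderiv u s x).re
          = (2 * (ν/2)) * ((starRingEnd ℂ) (u s x) * lapC (u s) x).im
            + 2 * ((starRingEnd ℂ) (u s x) * f s x (u s x)).im := by
        intro x
        have hpde' : Complex.I * tderiv u s x
            = ((ν/2 : ℝ) : ℂ) * lapC (u s) x + f s x (u s x) := by
          push_cast
          exact hpde s hsIcc x
        have := Aux.pde_re (ν/2) (u s x) (tderiv u s x) (lapC (u s) x) (f s x (u s x)) hpde'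
        linarith [this]
      have hito : ∫ x, ((starRingEnd ℂ) (u s x) * lapC (u s) x).im = 0 := by
        have : (fun x => ((starRingEnd ℂ) (u s x) * lapC (u s) x).im)
            = fun x => ((starRingEnd ℂ) (φ x) * lapC (⇑φ) x).im := by rw [husφ]
        rw [this]
        exact Aux.im_lap_int_zero φ
      calc (∫ x, 2 * ((starRingEnd ℂ) (u s x) * tderiv u s x).re)
          = ∫ x, ((2 * (ν/2)) * ((starRingEnd ℂ) (u s x) * lapC (u s) x).im
              + 2 * ((starRingEnd ℂ) (u s x) * f s x (u s x)).im) := by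
            congr 1; funext x; exact hpt x
        _ = (2 * (ν/2)) * (∫ x, ((starRingEnd ℂ) (u s x) * lapC (u s) x).im)
              + 2 * (∫ x, ((starRingEnd ℂ) (u s x) * f s x (u s x)).im) := by
            rw [integral_add (hI1.const_mul _) (hI2.const_mul _),
              MeasureTheory.integral_const_mul, MeasureTheory.integral_const_mul]
        _ = 2 * G s := by
            rw [hito, mul_zero, zero_add, hGdef]
            congr 1
            congr 1
            funext x
            exact Aux.im_conj_mul _ _
    rw [← hval]
    exact key.2
  -- continuity of the mass on [0,T]
  have hFcont : ContinuousOn (fun s => ∫ x, ‖u s x‖^2) (Icc (0:ℝ) T) := by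
    apply continuousOn_of_dominated (bound := h)
    · exact fun s _ => ((hcux s).norm.pow 2).aestronglyMeasurable
    · intro s hs
      exact Filter.Eventually.of_forall fun x => by
        rw [Real.norm_eq_abs, abs_of_nonneg (by positivity)]
        exact hb1 s hs x
    · exact hhint
    · exact Filter.Eventually.of_forall fun x =>
        (((hcus x).norm.pow 2)).continuousOn
  -- continuity of G on [0,T]
  have hGcont : ContinuousOn G (Icc (0:ℝ) T) := by
    apply continuousOn_of_dominated (bound := h)
    · intro s _
      exact (((Complex.continuous_re.comp (hcux s)).mul
          (Complex.continuous_im.comp (hcfx s))).sub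
        ((Complex.continuous_im.comp (hcux s)).mul
          (Complex.continuous_re.comp (hcfx s)))).aestronglyMeasurable
    · intro s hs
      refine Filter.Eventually.of_forall fun x => ?_
      rw [Real.norm_eq_abs, ← Aux.im_conj_mul]
      exact (Aux.abs_im_conj_mul_le _ _).trans (hb5 s hs x)
    · exact hhint
    · refine Filter.Eventually.of_forall fun x => ?_
      exact (((Complex.continuous_re.comp (hcus x)).mul
          (Complex.continuous_im.comp (hcfs x))).sub
        ((Complex.continuous_im.comp (hcus x)).mul
          (Complex.continuous_re.comp (hcfs x)))).continuousOn
  -- fundamental theorem of calculus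
  have hsub : Icc t T ⊆ Icc (0:ℝ) T := Icc_subset_Icc ht.1 le_rfl
  have hFTC : ∫ s in t..T, (2 * G s)
      = (∫ x, ‖u T x‖^2) - (∫ x, ‖u t x‖^2) := by
    apply intervalIntegral.integral_eq_sub_of_hasDeriv_right_of_le ht.2
    · exact hFcont.mono hsub
    · exact fun s hs => (hderivF s hs).hasDerivWithinAt
    · apply ContinuousOn.intervalIntegrable
      rw [uIcc_of_le ht.2]
      exact (continuousOn_const.mul hGcont).mono hsub
  rw [← hFTC, intervalIntegral.integral_const_mul]
end
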